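/- arXiv:1502.01537 — 8 statements merged into one kernel-verified Lean document; each statement's English description precedes it below -/
import Mathlib

section
/- Let λ be a nonzero real number and let α₀, α₁, α₂, β₀, β₁, β₂ be real numbers with δ₁ ≤ 0 and δ₃ ≥ 0, and assume P_β(λ) ≠ 0. If u, v ∈ ℂ satisfy v·conj(u) − u·conj(v) = 2iλ, then P_β(λ)·v + P_α(λ)·u ≠ 0. (Applied to u = e(0,λ), v = e′(0,λ), the values at x = 0 of the Jost solution and its derivative, this says that the function E(λ) = P_β(λ)e′(0,λ) + P_α(λ)e(0,λ) has no zeros on the real axis except possibly λ = 0.) -/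
open Complex ComplexConjugate

/-- If `λ` is a nonzero real, `δ₁ ≤ 0`, `δ₃ ≥ 0`, `P_β(λ) ≠ 0`, and `u, v`
satisfy the Wronskian relation `v·conj u − u·conj v = 2iλ`, then
`P_β(λ)·v + P_α(λ)·u ≠ 0`. -/
theorem stmt0 (l : ℝ) (hl : l ≠ 0)
    (α₀ α₁ α₂ β₀ β₁ β₂ : ℝ)
    (hδ1 : α₀ * β₁ - α₁ * β₀ ≤ 0)
    (hδ3 : 0 ≤ α₁ * β₂ - α₂ * β₁)
    (hPβ : (β₀ : ℂ) + I * β₁ * l + β₂ * (l:ℂ) ^ 2 ≠ 0)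
    (u v : ℂ)
    (hW : v * conj u - u * conj v = 2 * I * l) :
    ((β₀ : ℂ) + I * β₁ * l + β₂ * (l:ℂ) ^ 2) * v +
      ((α₀ : ℂ) + I * α₁ * l + α₂ * (l:ℂ) ^ 2) * u ≠ 0 := by
  intro h
  set B : ℂ := (β₀ : ℂ) + I * β₁ * l + β₂ * (l:ℂ) ^ 2 with hB
  set A : ℂ := (α₀ : ℂ) + I * α₁ * l + α₂ * (l:ℂ) ^ 2 with hA
  have hconjB : conj B = (β₀ : ℂ) - I * β₁ * l + β₂ * (l:ℂ) ^ 2 := by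
    simp [hB, map_add, map_mul, Complex.conj_ofReal]
    ring
  have hconjA : conj A = (α₀ : ℂ) - I * α₁ * l + α₂ * (l:ℂ) ^ 2 := by
    simp [hA, map_add, map_mul, Complex.conj_ofReal]
    ring
  have h1 : B * v = -(A * u) := by linear_combination h
  have h1' : conj B * conj v = -(conj A * conj u) := by
    rw [← map_mul, ← map_mul, ← map_neg]
    exact congrArg conj h1
  have key : 2 * I * l * (B * conj B) = (conj A * B - A * conj B) * (u * conj u) := by
    linear_combination (-(B * conj B)) * hW + (conj B * conj u) * h1 + (-(B * u)) * h1'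
  rw [Complex.mul_conj, Complex.mul_conj, hconjA, hconjB] at key
  have key2 : (2 * I : ℂ) * ((l : ℂ) * (Complex.normSq B : ℂ)) =
      (2 * I : ℂ) * ((l : ℂ) * ((α₀ * β₁ - α₁ * β₀ : ℝ) - (α₁ * β₂ - α₂ * β₁ : ℝ) * (l : ℂ)^2) * (Complex.normSq u : ℂ)) := by
    push_cast
    linear_combination key
  have h2I : (2 * I : ℂ) ≠ 0 := by simp [Complex.I_ne_zero]
  have key3 := mul_left_cancel₀ h2I key2
  have keyR : l * Complex.normSq B =
      l * ((α₀ * β₁ - α₁ * β₀) - (α₁ * β₂ - α₂ * β₁) * l ^ 2) * Complex.normSq u := by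
    have := key3
    push_cast at this
    exact_mod_cast this
  have hBpos : 0 < Complex.normSq B := Complex.normSq_pos.mpr hPβ
  have hupos : 0 ≤ Complex.normSq u := Complex.normSq_nonneg u
  have hc : Complex.normSq B =
      ((α₀ * β₁ - α₁ * β₀) - (α₁ * β₂ - α₂ * β₁) * l ^ 2) * Complex.normSq u :=
    mul_left_cancel₀ hl (by linear_combination keyR)
  nlinarith [mul_nonneg (mul_nonneg hδ3 (sq_nonneg l)) hupos,
    mul_nonneg hδ3 (sq_nonneg l)]
end

section
/- Let λ be a nonzero real number, q : [0,∞) → ℝ continuous, and ρ the piecewise constant function above. Let e : [0,∞) → ℂ be continuously differentiable, twice differentiable on (0,a) and (a,∞), satisfying −e″(x) + q(x)e(x) = λ²ρ(x)e(x) for all x ≠ a, and satisfying e′(x)·conj(e(x)) − e(x)·conj(e′(x)) = 2iλ for all x ≥ 0. Assume E(λ) := P_β(λ)e′(0) + P_α(λ)e(0) ≠ 0 and set S(λ) := (P_β(λ)·conj(e′(0)) + P_α(λ)·conj(e(0)))/E(λ). If w : [0,∞) → ℂ is continuously differentiable, twice differentiable on (0,a) and (a,∞), satisfies −w″ + q w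 = λ²ρ w for x ≠ a, with w(0) = P_β(λ) and w′(0) = −P_α(λ), then for every x ≥ 0: 2iλ·w(x)/E(λ) = conj(e(x)) − S(λ)·e(x). -/
open Complex ComplexConjugate Set

lemma constR_of_deriv_interior_zero {f : ℝ → ℝ} {s : Set ℝ} (hs : Convex ℝ s)
    (hc : ContinuousOn f s) (hd : ∀ x ∈ interior s, HasDerivAt f 0 x) :
    ∀ x ∈ s, ∀ y ∈ s, f x = f y := by
  have hdiff : DifferentiableOn ℝ f (interior s) := fun x hx =>
    ((hd x hx).differentiableAt).differentiableWithinAt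
  have h0 : ∀ x ∈ interior s, deriv f x = 0 := fun x hx => (hd x hx).deriv
  have hm := monotoneOn_of_deriv_nonneg hs hc hdiff (fun x hx => (h0 x hx).ge)
  have hA := antitoneOn_of_deriv_nonpos hs hc hdiff (fun x hx => (h0 x hx).le)
  intro x hx y hy
  rcases le_total x y with h | h
  · exact le_antisymm (hm hx hy h) (hA hx hy h)
  · exact le_antisymm (hA hy hx h) (hm hy hx h)

lemma constC_of_deriv_interior_zero {f : ℝ → ℂ} {s : Set ℝ} (hs : Convex ℝ s)
    (hc : ContinuousOn f s) (hd : ∀ x ∈ interior s, HasDerivAt f 0 x) :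
    ∀ x ∈ s, ∀ y ∈ s, f x = f y := by
  intro x hx y hy
  have hre := constR_of_deriv_interior_zero hs (Complex.continuous_re.comp_continuousOn hc)
    (fun z hz => by have h := Complex.reCLM.hasFDerivAt.comp_hasDerivAt z (hd z hz); simp at h; exact h)
    x hx y hy
  have him := constR_of_deriv_interior_zero hs (Complex.continuous_im.comp_continuousOn hc)
    (fun z hz => by have h := Complex.imCLM.hasFDerivAt.comp_hasDerivAt z (hd z hz); simp at h; exact h)
    x hx y hy
  exact Complex.ext hre him

/-- Constancy of the Wronskian of two solutions of `y'' = Q y` on `[0,∞)`,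
where the equation may fail at the single point `a`. -/
lemma wronskian_const (a : ℝ) (ha : 0 < a) (Q : ℝ → ℂ)
    (u u' u'' v v' v'' : ℝ → ℂ)
    (hu1 : ∀ x ∈ Ici (0:ℝ), HasDerivWithinAt u (u' x) (Ici 0) x)
    (hu1c : ContinuousOn u' (Ici 0))
    (hu2 : ∀ x ∈ Ioo 0 a ∪ Ioi a, HasDerivAt u' (u'' x) x)
    (huq : ∀ x ∈ Ici (0:ℝ), x ≠ a → u'' x = Q x * u x)
    (hv1 : ∀ x ∈ Ici (0:ℝ), HasDerivWithinAt v (v' x) (Ici 0) x)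
    (hv1c : ContinuousOn v' (Ici 0))
    (hv2 : ∀ x ∈ Ioo 0 a ∪ Ioi a, HasDerivAt v' (v'' x) x)
    (hvq : ∀ x ∈ Ici (0:ℝ), x ≠ a → v'' x = Q x * v x) :
    ∀ x ∈ Ici (0:ℝ), u' x * v x - u x * v' x = u' 0 * v 0 - u 0 * v' 0 := by
  set W : ℝ → ℂ := fun x => u' x * v x - u x * v' x with hWdef
  have huc : ContinuousOn u (Ici 0) := fun x hx => (hu1 x hx).continuousWithinAt
  have hvc : ContinuousOn v (Ici 0) := fun x hx => (hv1 x hx).continuousWithinAt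
  have hWc : ContinuousOn W (Ici 0) := ((hu1c.mul hvc).sub (huc.mul hv1c))
  have hWd : ∀ x ∈ Ioo 0 a ∪ Ioi a, HasDerivAt W 0 x := by
    intro x hx
    have hx0 : (0:ℝ) < x := by
      rcases hx with hx | hx
      · exact hx.1
      · exact ha.trans hx
    have hxa : x ≠ a := by
      rcases hx with hx | hx
      · exact ne_of_lt hx.2
      · exact ne_of_gt hx
    have hmem : Ici (0:ℝ) ∈ nhds x := Ici_mem_nhds hx0
    have hu : HasDerivAt u (u' x) x := (hu1 x hx0.le).hasDerivAt hmem
    have hv : HasDerivAt v (v' x) x := (hv1 x hx0.le).hasDerivAt hmem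
    have h := ((hu2 x hx).mul hv).sub (hu.mul (hv2 x hx))
    have hz : u'' x * v x + u' x * v' x - (u' x * v' x + u x * v'' x) = 0 := by
      rw [huq x hx0.le hxa, hvq x hx0.le hxa]; ring
    rw [hz] at h
    exact h
  -- constancy on [0, a]
  have h1 : ∀ x ∈ Icc (0:ℝ) a, W x = W 0 := by
    intro x hx
    refine constC_of_deriv_interior_zero (convex_Icc 0 a)
      (hWc.mono Icc_subset_Ici_self) ?_ x hx 0 ⟨le_refl 0, ha.le⟩
    intro z hz
    rw [interior_Icc] at hz
    exact hWd z (Or.inl hz)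
  have h2 : ∀ x ∈ Ici a, W x = W a := by
    intro x hx
    refine constC_of_deriv_interior_zero (convex_Ici a)
      (hWc.mono (Ici_subset_Ici.mpr ha.le)) ?_ x hx a (le_refl a)
    intro z hz
    rw [interior_Ici] at hz
    exact hWd z (Or.inr hz)
  intro x hx
  show W x = W 0
  rcases le_total x a with h | h
  · exact h1 x ⟨hx, h⟩
  · rw [h2 x h]; exact h1 a ⟨ha.le, le_refl a⟩

/-- Representation of the solution `w` with the polynomial initial data in terms of
the Jost solution `e` and the scattering function `S(λ)`:
`2iλ w(x)/E(λ) = conj(e(x)) − S(λ) e(x)` for all `x ≥ 0`. -/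
theorem stmt1 (a α : ℝ) (ha : 0 < a) (hα : 0 < α) (hα1 : α ≠ 1)
    (ρ : ℝ → ℝ) (hρ : ∀ x, ρ x = if x < a then α ^ 2 else 1)
    (l : ℝ) (hl : l ≠ 0)
    (q : ℝ → ℝ) (hq : ContinuousOn q (Ici 0))
    (α₀ α₁ α₂ β₀ β₁ β₂ : ℝ)
    (e e' e'' : ℝ → ℂ)
    (he1 : ∀ x ∈ Ici (0:ℝ), HasDerivWithinAt e (e' x) (Ici 0) x)
    (he1c : ContinuousOn e' (Ici 0))
    (he2 : ∀ x ∈ Ioo 0 a ∪ Ioi a, HasDerivAt e' (e'' x) x)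
    (heq : ∀ x ∈ Ici (0:ℝ), x ≠ a →
      -e'' x + (q x : ℂ) * e x = (l:ℂ) ^ 2 * (ρ x : ℂ) * e x)
    (hW : ∀ x ∈ Ici (0:ℝ), e' x * conj (e x) - e x * conj (e' x) = 2 * I * l)
    (E : ℂ)
    (hE : E = ((β₀:ℂ) + I * β₁ * l + β₂ * (l:ℂ) ^ 2) * e' 0 +
      ((α₀:ℂ) + I * α₁ * l + α₂ * (l:ℂ) ^ 2) * e 0)
    (hE0 : E ≠ 0)
    (S : ℂ)
    (hS : S = (((β₀:ℂ) + I * β₁ * l + β₂ * (l:ℂ) ^ 2) * conj (e' 0) +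
      ((α₀:ℂ) + I * α₁ * l + α₂ * (l:ℂ) ^ 2) * conj (e 0)) / E)
    (w w' w'' : ℝ → ℂ)
    (hw1 : ∀ x ∈ Ici (0:ℝ), HasDerivWithinAt w (w' x) (Ici 0) x)
    (hw1c : ContinuousOn w' (Ici 0))
    (hw2 : ∀ x ∈ Ioo 0 a ∪ Ioi a, HasDerivAt w' (w'' x) x)
    (hweq : ∀ x ∈ Ici (0:ℝ), x ≠ a →
      -w'' x + (q x : ℂ) * w x = (l:ℂ) ^ 2 * (ρ x : ℂ) * w x)
    (hw0 : w 0 = (β₀:ℂ) + I * β₁ * l + β₂ * (l:ℂ) ^ 2)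
    (hw0' : w' 0 = -((α₀:ℂ) + I * α₁ * l + α₂ * (l:ℂ) ^ 2)) :
    ∀ x ∈ Ici (0:ℝ), 2 * I * l * w x / E = conj (e x) - S * e x := by
  set Q : ℝ → ℂ := fun x => (q x : ℂ) - (l:ℂ) ^ 2 * (ρ x : ℂ) with hQdef
  have hQe : ∀ x ∈ Ici (0:ℝ), x ≠ a → e'' x = Q x * e x := by
    intro x hx hxa
    have := heq x hx hxa
    simp only [hQdef]
    linear_combination -this
  have hQw : ∀ x ∈ Ici (0:ℝ), x ≠ a → w'' x = Q x * w x := by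
    intro x hx hxa
    have := hweq x hx hxa
    simp only [hQdef]
    linear_combination -this
  -- conjugate solution
  have hQconj : ∀ x, conj (Q x) = Q x := by
    intro x
    simp [hQdef, map_sub, map_mul, map_pow, Complex.conj_ofReal]
  have hce1 : ∀ x ∈ Ici (0:ℝ), HasDerivWithinAt (fun y => conj (e y)) (conj (e' x)) (Ici 0) x := by
    intro x hx
    exact (he1 x hx).star
  have hce1c : ContinuousOn (fun x => conj (e' x)) (Ici 0) := by
    exact Complex.continuous_conj.comp_continuousOn he1c
  have hce2 : ∀ x ∈ Ioo 0 a ∪ Ioi a, HasDerivAt (fun y => conj (e' y)) (conj (e'' x)) x := by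
    intro x hx
    exact (he2 x hx).star
  have hQce : ∀ x ∈ Ici (0:ℝ), x ≠ a → conj (e'' x) = Q x * conj (e x) := by
    intro x hx hxa
    rw [hQe x hx hxa, map_mul, hQconj]
  -- Wronskians
  have hW1 := wronskian_const a ha Q w w' w'' e e' e'' hw1 hw1c hw2 hQw he1 he1c he2 hQe
  have hW2 := wronskian_const a ha Q w w' w'' (fun y => conj (e y)) (fun y => conj (e' y))
    (fun y => conj (e'' y)) hw1 hw1c hw2 hQw hce1 hce1c hce2 hQce
  intro x hx
  have h1 := hW1 x hx
  have h2 := hW2 x hx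
  have h3 := hW x hx
  have hSE : S * E = ((β₀:ℂ) + I * β₁ * l + β₂ * (l:ℂ) ^ 2) * conj (e' 0) +
      ((α₀:ℂ) + I * α₁ * l + α₂ * (l:ℂ) ^ 2) * conj (e 0) := by
    rw [hS, div_mul_cancel₀ _ hE0]
  rw [div_eq_iff hE0]
  -- algebraic identity: W2(x) * e x - W1(x) * conj (e x) = w x * (e' ē - e ē') = 2 I l w x
  have key : (w' x * conj (e x) - w x * conj (e' x)) * e x
      - (w' x * e x - w x * e' x) * conj (e x)
      = w x * (e' x * conj (e x) - e x * conj (e' x)) := by ring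
  rw [h1, h2, h3, hw0, hw0'] at key
  linear_combination -key + e x * hSE - conj (e x) * hE
end

section
/- Let λ ∈ ℂ, let α₀, α₁, α₂, β₀, β₁, β₂ be real numbers with P_β(λ) ≠ 0, and let u, v ∈ ℂ satisfy P_β(λ)·v + P_α(λ)·u = 0. Then v·conj(u) − u·conj(v) = i·|u|²·(λ + conj(λ))·(δ₁ + 2·Im(λ)·δ₂ − δ₃·|λ|²)/|P_β(λ)|². -/
open Complex ComplexConjugate

/-- The Wronskian identity at a zero of `E(λ)`: if `P_β(λ)·v + P_α(λ)·u = 0` then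
`v·conj u − u·conj v = i|u|²(λ + conj λ)(δ₁ + 2 Im λ · δ₂ − δ₃|λ|²)/|P_β(λ)|²`. -/
theorem stmt5 (l : ℂ) (α₀ α₁ α₂ β₀ β₁ β₂ : ℝ)
    (hPβ : (β₀ : ℂ) + I * β₁ * l + β₂ * l ^ 2 ≠ 0)
    (u v : ℂ)
    (h : ((β₀ : ℂ) + I * β₁ * l + β₂ * l ^ 2) * v +
      ((α₀ : ℂ) + I * α₁ * l + α₂ * l ^ 2) * u = 0) :
    v * conj u - u * conj v =
      I * (Complex.normSq u : ℂ) * (l + conj l) *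
        (((α₀ * β₁ - α₁ * β₀) + 2 * l.im * (α₀ * β₂ - α₂ * β₀)
          - (α₁ * β₂ - α₂ * β₁) * Complex.normSq l : ℝ) : ℂ) /
        (Complex.normSq ((β₀ : ℂ) + I * β₁ * l + β₂ * l ^ 2) : ℂ) := by
  obtain ⟨x, y, rfl⟩ : ∃ x y : ℝ, l = (x : ℂ) + (y : ℂ) * I :=
    ⟨l.re, l.im, (Complex.re_add_im l).symm⟩
  have hc := congrArg (fun z => (starRingEnd ℂ) z) h
  simp only [map_add, map_mul, Complex.conj_ofReal, Complex.conj_I, map_pow, map_zero] at hc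
  have hne : ((Complex.normSq ((β₀ : ℂ) + I * β₁ * ((x:ℂ)+(y:ℂ)*I)
      + β₂ * ((x:ℂ)+(y:ℂ)*I) ^ 2) : ℂ)) ≠ 0 := by
    simpa [Complex.normSq_eq_zero] using hPβ
  rw [eq_div_iff hne, ← Complex.mul_conj, ← Complex.mul_conj]
  simp only [map_add, map_mul, Complex.conj_ofReal, Complex.conj_I, map_pow,
    Complex.normSq_add_mul_I]
  simp only [Complex.add_im, Complex.ofReal_im, Complex.mul_im, Complex.I_im, Complex.I_re,
    Complex.ofReal_re, Complex.mul_re]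
  push_cast
  linear_combination
    ((starRingEnd ℂ) u * ((β₀:ℂ) + -I * β₁ * ((x:ℂ) + (y:ℂ) * -I)
        + β₂ * ((x:ℂ) + (y:ℂ) * -I) ^ 2)) * h
    - (u * ((β₀:ℂ) + I * β₁ * ((x:ℂ) + (y:ℂ) * I) + β₂ * ((x:ℂ) + (y:ℂ) * I) ^ 2)) * hc
    + (-2 * u * (starRingEnd ℂ) u * I * (x:ℂ) * (y:ℂ)^2 * (α₂:ℂ) * (β₁:ℂ)
       + 2 * u * (starRingEnd ℂ) u * I * (x:ℂ) * (y:ℂ)^2 * (α₁:ℂ) * (β₂:ℂ)) * Complex.I_sq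
end

section
/- Let α₀, α₁, α₂, β₀, β₁, β₂ be real numbers with δ₁ ≤ 0, δ₂ ≤ 0 and δ₃ ≥ 0. Let λ₁ ∈ ℂ with Im λ₁ > 0 and P_β(λ₁) ≠ 0. Let q : [0,∞) → ℝ, let ρ be the piecewise constant function above, and let e₁ : [0,∞) → ℂ be continuously differentiable, twice differentiable on (0,a) and (a,∞), with −e₁″ + q e₁ = λ₁²ρ e₁ for x ≠ a. Assume x ↦ |e₁(x)|²ρ(x) is integrable on [0,∞) with ∫₀^∞ |e₁(x)|²ρ(x) dx > 0, that e₁′(x)·conj(e₁(x)) − e₁(x)·conj(e₁′(x)) → 0 as x → ∞, and that P_β(λ₁)e₁′(0) + P_α(λ₁)e₁(0) = 0 (i.e. λ₁ is a zero of E). Then Re λ₁ = 0; that is, every zero of E(λ) in the open upper half-plane lies on the imaginary axis. -/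
open Complex ComplexConjugate Set MeasureTheory

/-- Every zero of `E(λ)` in the open upper half-plane lies on the imaginary axis. -/
theorem stmt6 (α₀ α₁ α₂ β₀ β₁ β₂ : ℝ)
    (hδ1 : α₀ * β₁ - α₁ * β₀ ≤ 0)
    (hδ2 : α₀ * β₂ - α₂ * β₀ ≤ 0)
    (hδ3 : 0 ≤ α₁ * β₂ - α₂ * β₁)
    (l₁ : ℂ) (hIm : 0 < l₁.im)
    (hPβ : (β₀ : ℂ) + I * β₁ * l₁ + β₂ * l₁ ^ 2 ≠ 0)
    (a α : ℝ) (ha : 0 < a) (hα : 0 < α) (hα1 : α ≠ 1)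
    (ρ : ℝ → ℝ) (hρ : ∀ x, ρ x = if x < a then α ^ 2 else 1)
    (q : ℝ → ℝ)
    (e₁ e₁' e₁'' : ℝ → ℂ)
    (h₁1 : ∀ x ∈ Ici (0:ℝ), HasDerivWithinAt e₁ (e₁' x) (Ici 0) x)
    (h₁c : ContinuousOn e₁' (Ici 0))
    (h₁2 : ∀ x ∈ Ioo 0 a ∪ Ioi a, HasDerivAt e₁' (e₁'' x) x)
    (h₁eq : ∀ x ∈ Ici (0:ℝ), x ≠ a →
      -e₁'' x + (q x : ℂ) * e₁ x = l₁ ^ 2 * (ρ x : ℂ) * e₁ x)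
    (hint : IntegrableOn (fun x => Complex.normSq (e₁ x) * ρ x) (Ici 0))
    (hpos : 0 < ∫ x in Ici (0:ℝ), Complex.normSq (e₁ x) * ρ x)
    (hlim : Filter.Tendsto (fun x => e₁' x * conj (e₁ x) - e₁ x * conj (e₁' x))
      Filter.atTop (nhds 0))
    (hzero : ((β₀ : ℂ) + I * β₁ * l₁ + β₂ * l₁ ^ 2) * e₁' 0 +
      ((α₀ : ℂ) + I * α₁ * l₁ + α₂ * l₁ ^ 2) * e₁ 0 = 0) :
    l₁.re = 0 := by
  set B : ℂ := (β₀ : ℂ) + I * β₁ * l₁ + β₂ * l₁ ^ 2 with hBdef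
  set A : ℂ := (α₀ : ℂ) + I * α₁ * l₁ + α₂ * l₁ ^ 2 with hAdef
  set hfun : ℝ → ℝ := fun x => Complex.normSq (e₁ x) * ρ x with hhdef
  set c : ℂ := conj (l₁ ^ 2) - l₁ ^ 2 with hcdef
  set g : ℝ → ℂ := fun x => c * ((hfun x : ℝ) : ℂ) with hgdef
  set W : ℝ → ℂ := fun x => e₁' x * conj (e₁ x) - e₁ x * conj (e₁' x) with hWdef
  have hce : ContinuousOn e₁ (Ici 0) := fun x hx => (h₁1 x hx).continuousWithinAt
  have hcW : ContinuousOn W (Ici 0) := by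
    exact (h₁c.mul (Complex.continuous_conj.comp_continuousOn hce)).sub
      (hce.mul (Complex.continuous_conj.comp_continuousOn h₁c))
  -- derivative of W
  have hW' : ∀ x ∈ Ioo 0 a ∪ Ioi a, HasDerivAt W (g x) x := by
    intro x hx
    have hx0 : 0 < x := by
      rcases hx with h | h
      · exact h.1
      · exact ha.trans h
    have hxa : x ≠ a := by
      rcases hx with h | h
      · exact ne_of_lt h.2
      · exact ne_of_gt h
    have hd1 : HasDerivAt e₁ (e₁' x) x := (h₁1 x hx0.le).hasDerivAt (Ici_mem_nhds hx0)
    have hd2 : HasDerivAt e₁' (e₁'' x) x := h₁2 x hx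
    have hD : HasDerivAt W
        (e₁'' x * conj (e₁ x) + e₁' x * conj (e₁' x)
          - (e₁' x * conj (e₁' x) + e₁ x * conj (e₁'' x))) x :=
      (hd2.mul hd1.star).sub (hd1.mul hd2.star)
    have heq := h₁eq x hx0.le hxa
    have he'' : e₁'' x = (q x : ℂ) * e₁ x - l₁ ^ 2 * (ρ x : ℂ) * e₁ x := by
      linear_combination -heq
    have hval : e₁'' x * conj (e₁ x) + e₁' x * conj (e₁' x)
        - (e₁' x * conj (e₁' x) + e₁ x * conj (e₁'' x)) = g x := by
      rw [he'']
      simp only [hgdef, hhdef, hcdef]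
      push_cast
      rw [← Complex.mul_conj]
      simp only [map_sub, map_mul, Complex.conj_ofReal]
      ring
    exact hval ▸ hD
  -- integrability
  have hIoiInt : IntegrableOn g (Ioi 0) := by
    have : IntegrableOn (fun x => ((hfun x : ℝ) : ℂ)) (Ioi 0) :=
      (hint.mono_set Ioi_subset_Ici_self).ofReal
    exact this.const_mul c
  have hIccInt : ∀ b₁ b₂ : ℝ, 0 ≤ b₁ → b₁ ≤ b₂ → IntervalIntegrable g volume b₁ b₂ := by
    intro b₁ b₂ hb₁ hb₂
    have hsub : Icc b₁ b₂ ⊆ Ici (0:ℝ) := fun x hx => le_trans hb₁ hx.1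
    have : IntegrableOn g (Icc b₁ b₂) :=
      (((hint.mono_set hsub)).ofReal).const_mul c
    exact (this.mono_set (by rw [uIcc_of_le hb₂])).intervalIntegrable
  -- FTC on pieces
  have hFTC1 : ∫ y in (0:ℝ)..a, g y = W a - W 0 :=
    intervalIntegral.integral_eq_sub_of_hasDeriv_right_of_le ha.le
      (hcW.mono (fun x hx => hx.1))
      (fun x hx => (hW' x (Or.inl hx)).hasDerivWithinAt)
      (hIccInt 0 a le_rfl ha.le)
  have hFTC2 : ∀ b : ℝ, a ≤ b → ∫ y in a..b, g y = W b - W a := by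
    intro b hb
    exact intervalIntegral.integral_eq_sub_of_hasDeriv_right_of_le hb
      (hcW.mono (fun x hx => le_trans ha.le hx.1))
      (fun x hx => (hW' x (Or.inr hx.1)).hasDerivWithinAt)
      (hIccInt a b ha.le hb)
  have hEv : ∀ b : ℝ, a ≤ b → W b - W 0 = ∫ y in (0:ℝ)..b, g y := by
    intro b hb
    rw [← intervalIntegral.integral_add_adjacent_intervals
      (hIccInt 0 a le_rfl ha.le) (hIccInt a b ha.le hb), hFTC1, hFTC2 b hb]
    ring
  -- limits
  have hT1 : Filter.Tendsto (fun b => ∫ y in (0:ℝ)..b, g y) Filter.atTop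
      (nhds (∫ x in Ioi (0:ℝ), g x)) :=
    MeasureTheory.intervalIntegral_tendsto_integral_Ioi 0 hIoiInt Filter.tendsto_id
  have hT2 : Filter.Tendsto (fun b => W b - W 0) Filter.atTop (nhds (0 - W 0)) :=
    hlim.sub_const _
  have hT2' : Filter.Tendsto (fun b => ∫ y in (0:ℝ)..b, g y) Filter.atTop (nhds (0 - W 0)) := by
    refine hT2.congr' ?_
    filter_upwards [Filter.eventually_ge_atTop a] with b hb
    exact hEv b hb
  have hIoiVal : ∫ x in Ioi (0:ℝ), g x = 0 - W 0 := tendsto_nhds_unique hT1 hT2'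
  -- compute the integral of g
  set M : ℝ := ∫ x in Ici (0:ℝ), hfun x with hMdef
  have hgInt : ∫ x in Ioi (0:ℝ), g x = c * (M : ℂ) := by
    rw [hgdef, MeasureTheory.integral_const_mul, hMdef,
      MeasureTheory.integral_Ici_eq_integral_Ioi]
    congr 1
    exact integral_ofReal
  have hkey : c * (M : ℂ) = -(e₁' 0 * conj (e₁ 0) - e₁ 0 * conj (e₁' 0)) := by
    rw [← hgInt, hIoiVal]; simp [hWdef]
  -- boundary algebra
  set u : ℂ := e₁ 0
  set v : ℂ := e₁' 0
  have hzero' : conj B * conj v + conj A * conj u = 0 := by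
    have := congrArg (starRingEnd ℂ) hzero
    simpa [map_add, map_mul] using this
  have main : c * (M : ℂ) * (B * conj B) = (A * conj B - conj A * B) * (u * conj u) := by
    linear_combination (B * conj B) * hkey - (conj B * conj u) * hzero + (B * u) * hzero'
  have main' : (conj (l₁ ^ 2) - l₁ ^ 2) * (M : ℂ) * ((Complex.normSq B : ℝ) : ℂ)
      = (A * conj B - conj A * B) * ((Complex.normSq u : ℝ) : ℂ) := by
    rw [← Complex.mul_conj, ← Complex.mul_conj, ← hcdef]
    exact main
  -- pass to imaginary parts
  have him := congrArg Complex.im main'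
  have hlhs : ((conj (l₁ ^ 2) - l₁ ^ 2) * (M : ℂ) * ((Complex.normSq B : ℝ) : ℂ)).im
      = -2 * ((l₁ ^ 2).im) * M * Complex.normSq B := by
    simp only [Complex.mul_im, Complex.mul_re, Complex.sub_im, Complex.sub_re,
      Complex.ofReal_im, Complex.ofReal_re, Complex.conj_im, Complex.conj_re]
    ring
  have hrhs : ((A * conj B - conj A * B) * ((Complex.normSq u : ℝ) : ℂ)).im
      = 2 * (A * conj B).im * Complex.normSq u := by
    have h1 : conj A * B = conj (A * conj B) := by
      rw [map_mul, Complex.conj_conj]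
    rw [h1]
    simp only [Complex.mul_im, Complex.mul_re, Complex.sub_im, Complex.sub_re,
      Complex.ofReal_im, Complex.ofReal_re, Complex.conj_im, Complex.conj_re]
    ring
  rw [hlhs, hrhs] at him
  -- compute the two imaginary parts explicitly
  have hsq : (l₁ ^ 2).im = 2 * l₁.re * l₁.im := by
    simp only [pow_two, Complex.mul_im]; ring
  have hABim : (A * conj B).im
      = l₁.re * (-(α₀ * β₁ - α₁ * β₀) - 2 * l₁.im * (α₀ * β₂ - α₂ * β₀)
          + (l₁.re ^ 2 + l₁.im ^ 2) * (α₁ * β₂ - α₂ * β₁)) := by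
    rw [hAdef, hBdef]
    simp only [pow_two, Complex.mul_im, Complex.mul_re, Complex.add_re, Complex.add_im,
      Complex.I_re, Complex.I_im, Complex.ofReal_re, Complex.ofReal_im,
      Complex.conj_re, Complex.conj_im]
    ring
  rw [hsq, hABim] at him
  -- final real inequality argument
  set σ := l₁.re
  set τ := l₁.im
  set nB := Complex.normSq B with hnB
  set nU := Complex.normSq u with hnU
  have hnBpos : 0 < nB := Complex.normSq_pos.2 hPβ
  have hnUpos : 0 ≤ nU := Complex.normSq_nonneg u
  have hMpos : 0 < M := hpos
  set K : ℝ := -(α₀ * β₁ - α₁ * β₀) - 2 * τ * (α₀ * β₂ - α₂ * β₀)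
      + (σ ^ 2 + τ ^ 2) * (α₁ * β₂ - α₂ * β₁) with hKdef
  have hKnn : 0 ≤ K := by
    have h1 : 0 ≤ -(α₀ * β₁ - α₁ * β₀) := by linarith
    have h2 : 0 ≤ -(2 * τ * (α₀ * β₂ - α₂ * β₀)) := by nlinarith
    have h3 : 0 ≤ (σ ^ 2 + τ ^ 2) * (α₁ * β₂ - α₂ * β₁) := by positivity
    rw [hKdef]; linarith
  have hfact : σ * (2 * τ * M * nB + K * nU) = 0 := by
    linear_combination (-1/2 : ℝ) * him
  have hposfact : 0 < 2 * τ * M * nB + K * nU := by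
    have : 0 < 2 * τ * M * nB := by positivity
    nlinarith [mul_nonneg hKnn hnUpos]
  exact (mul_eq_zero.mp hfact).resolve_right (ne_of_gt hposfact)
end

section
/- Let μ > 0 and set β_μ = β₀ − β₁μ − β₂μ² and α_μ = α₀ − α₁μ − α₂μ² (the values P_β(iμ) and P_α(iμ), which are real), with β_μ ≠ 0. Let q : [0,∞) → ℝ, let ρ be the piecewise constant function above, and let f, g : [0,∞) → ℂ be continuously differentiable, twice differentiable on (0,a) and (a,∞), with f real-valued, satisfying for x ≠ a: −f″ + q f = −μ²ρ f and −g″ + q g = −μ²ρ g + 2iμ ρ f (g plays the role of the λ-derivative of the Jost solution at λ = iμ). Assume x ↦ f(x)²ρ(x) is integrable on [0,∞), that f(x)g′(x) − f′(x)g(x) → 0 as x → ∞, and that β_μ f′(0) + α_μ f(0) = 0 (i.e. E(iμ) = 0). Define Ė = i(β₁ + 2μβ₂)f′(0) + β_μ g′(0) + i(α₁ + 2μα₂)f(0) + α_μ g(0) (the value of dE/dλ at λ = iμ). Then 2μ ∫₀^∞ f(x)²ρ(x) dx + f(0)²·(−δ₁ − 2μδ₂ + μ²δ₃)/β_μ²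 = −i·Ė·f(0)/β_μ. -/
open Complex ComplexConjugate Set MeasureTheory

/-- The identity relating the norming integral and `Ė(iμ)` at a zero `iμ` of `E`. -/
theorem stmt7 (α₀ α₁ α₂ β₀ β₁ β₂ : ℝ)
    (a α : ℝ) (ha : 0 < a) (hα : 0 < α) (hα1 : α ≠ 1)
    (ρ : ℝ → ℝ) (hρ : ∀ x, ρ x = if x < a then α ^ 2 else 1)
    (μ : ℝ) (hμ : 0 < μ)
    (hβμ : β₀ - β₁ * μ - β₂ * μ ^ 2 ≠ 0)
    (q : ℝ → ℝ)
    (f f' f'' : ℝ → ℝ) (g g' g'' : ℝ → ℂ)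
    (hf1 : ∀ x ∈ Ici (0:ℝ), HasDerivWithinAt f (f' x) (Ici 0) x)
    (hfc : ContinuousOn f' (Ici 0))
    (hf2 : ∀ x ∈ Ioo 0 a ∪ Ioi a, HasDerivAt f' (f'' x) x)
    (hfeq : ∀ x ∈ Ici (0:ℝ), x ≠ a →
      -f'' x + q x * f x = -(μ ^ 2) * ρ x * f x)
    (hg1 : ∀ x ∈ Ici (0:ℝ), HasDerivWithinAt g (g' x) (Ici 0) x)
    (hgc : ContinuousOn g' (Ici 0))
    (hg2 : ∀ x ∈ Ioo 0 a ∪ Ioi a, HasDerivAt g' (g'' x) x)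
    (hgeq : ∀ x ∈ Ici (0:ℝ), x ≠ a →
      -g'' x + (q x : ℂ) * g x = -((μ:ℂ) ^ 2) * (ρ x : ℂ) * g x
        + 2 * I * μ * (ρ x : ℂ) * f x)
    (hint : IntegrableOn (fun x => f x ^ 2 * ρ x) (Ici 0))
    (hlim : Filter.Tendsto (fun x => (f x : ℂ) * g' x - (f' x : ℂ) * g x)
      Filter.atTop (nhds 0))
    (hzero : (β₀ - β₁ * μ - β₂ * μ ^ 2) * f' 0 + (α₀ - α₁ * μ - α₂ * μ ^ 2) * f 0 = 0)
    (Edot : ℂ)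
    (hEdot : Edot = I * ((β₁ : ℂ) + 2 * μ * β₂) * f' 0
      + ((β₀ - β₁ * μ - β₂ * μ ^ 2 : ℝ) : ℂ) * g' 0
      + I * ((α₁ : ℂ) + 2 * μ * α₂) * f 0
      + ((α₀ - α₁ * μ - α₂ * μ ^ 2 : ℝ) : ℂ) * g 0) :
    ((2 * μ * ∫ x in Ici (0:ℝ), f x ^ 2 * ρ x) +
        f 0 ^ 2 * (-(α₀ * β₁ - α₁ * β₀) - 2 * μ * (α₀ * β₂ - α₂ * β₀)
          + μ ^ 2 * (α₁ * β₂ - α₂ * β₁)) / (β₀ - β₁ * μ - β₂ * μ ^ 2) ^ 2 : ℝ)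
      = -I * Edot * (f 0 : ℂ) / ((β₀ - β₁ * μ - β₂ * μ ^ 2 : ℝ) : ℂ) := by
  -- notation
  set β : ℝ := β₀ - β₁ * μ - β₂ * μ ^ 2 with hβ
  set K : ℝ := ∫ x in Ici (0:ℝ), f x ^ 2 * ρ x with hK
  set F : ℝ → ℂ := fun x => (f x : ℂ) * g' x - (f' x : ℂ) * g x with hF
  -- continuity of F on Ici 0
  have hfcont : ContinuousOn f (Ici 0) := fun x hx => (hf1 x hx).continuousWithinAt
  have hgcont : ContinuousOn g (Ici 0) := fun x hx => (hg1 x hx).continuousWithinAt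
  have hFcont : ContinuousOn F (Ici 0) := by
    apply ContinuousOn.sub
    · exact (Complex.continuous_ofReal.comp_continuousOn hfcont).mul hgc
    · exact (Complex.continuous_ofReal.comp_continuousOn hfc).mul hgcont
  -- derivative of F away from 0 and a
  have hFderiv : ∀ x ∈ Ioo 0 a ∪ Ioi a,
      HasDerivAt F (-(2 * I * μ * (ρ x : ℂ) * (f x : ℂ) ^ 2)) x := by
    intro x hx
    have hx0 : 0 < x := by
      rcases hx with h | h
      · exact h.1
      · exact ha.trans h
    have hxa : x ≠ a := by
      rcases hx with h | h
      · exact ne_of_lt h.2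
      · exact ne_of_gt h
    have hnhds : Ici (0:ℝ) ∈ nhds x := Ici_mem_nhds hx0
    have hfd : HasDerivAt (fun y => (f y : ℂ)) (f' x : ℂ) x :=
      ((hf1 x hx0.le).hasDerivAt hnhds).ofReal_comp
    have hf'd : HasDerivAt (fun y => (f' y : ℂ)) (f'' x : ℂ) x :=
      (hf2 x hx).ofReal_comp
    have hgd : HasDerivAt g (g' x) x := (hg1 x hx0.le).hasDerivAt hnhds
    have hg'd : HasDerivAt g' (g'' x) x := hg2 x hx
    have hprod : HasDerivAt F ((f' x : ℂ) * g' x + (f x : ℂ) * g'' x -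
        ((f'' x : ℂ) * g x + (f' x : ℂ) * g' x)) x := (hfd.mul hg'd).sub (hf'd.mul hgd)
    convert hprod using 1
    have h1 := hfeq x hx0.le hxa
    have h2 := hgeq x hx0.le hxa
    have h1' : -(f'' x : ℂ) + (q x : ℂ) * (f x : ℂ)
        = -((μ:ℂ) ^ 2) * (ρ x : ℂ) * (f x : ℂ) := by
      exact_mod_cast congrArg (Complex.ofReal) h1
    linear_combination (f x : ℂ) * h2 - (g x) * h1'
  -- interval integrability of the derivative
  have hintG : ∀ b : ℝ, 0 ≤ b → IntervalIntegrable
      (fun x => -(2 * I * μ * (ρ x : ℂ) * (f x : ℂ) ^ 2)) volume 0 b := by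
    intro b hb
    rw [intervalIntegrable_iff_integrableOn_Icc_of_le hb]
    have : IntegrableOn (fun x => f x ^ 2 * ρ x) (Icc 0 b) :=
      hint.mono_set (Icc_subset_Ici_self)
    have h2 : IntegrableOn (fun x => ((f x ^ 2 * ρ x : ℝ) : ℂ)) (Icc 0 b) := this.ofReal
    have h3 := h2.const_mul (-(2 * I * μ))
    apply h3.congr
    apply Filter.Eventually.of_forall
    intro x
    push_cast
    ring
  -- FTC on [0, b] for b ≥ a
  have hFTC : ∀ b : ℝ, a ≤ b →
      (∫ y in (0:ℝ)..b, -(2 * I * μ * (ρ y : ℂ) * (f y : ℂ) ^ 2)) = F b - F 0 := by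
    intro b hab
    have hb0 : (0:ℝ) ≤ b := ha.le.trans hab
    have i1 : IntervalIntegrable
        (fun x => -(2 * I * μ * (ρ x : ℂ) * (f x : ℂ) ^ 2)) volume 0 a :=
      (hintG b hb0).mono_set (by
        rw [uIcc_of_le ha.le, uIcc_of_le hb0]
        exact Icc_subset_Icc le_rfl hab)
    have i2 : IntervalIntegrable
        (fun x => -(2 * I * μ * (ρ x : ℂ) * (f x : ℂ) ^ 2)) volume a b :=
      (hintG b hb0).mono_set (by
        rw [uIcc_of_le hab, uIcc_of_le hb0]
        exact Icc_subset_Icc ha.le le_rfl)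
    have e1 : (∫ y in (0:ℝ)..a, -(2 * I * μ * (ρ y : ℂ) * (f y : ℂ) ^ 2)) = F a - F 0 := by
      apply intervalIntegral.integral_eq_sub_of_hasDeriv_right_of_le ha.le
        (hFcont.mono (Icc_subset_Ici_self)) _ i1
      intro x hx
      exact (hFderiv x (Or.inl hx)).hasDerivWithinAt
    have e2 : (∫ y in a..b, -(2 * I * μ * (ρ y : ℂ) * (f y : ℂ) ^ 2)) = F b - F a := by
      apply intervalIntegral.integral_eq_sub_of_hasDeriv_right_of_le hab
        (hFcont.mono (Icc_subset_Ici_self.trans (Ici_subset_Ici.mpr ha.le))) _ i2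
      intro x hx
      exact (hFderiv x (Or.inr hx.1)).hasDerivWithinAt
    rw [← intervalIntegral.integral_add_adjacent_intervals i1 i2, e1, e2]
    ring
  -- express the interval integral via the real integral
  have hexpr : ∀ b : ℝ, 0 ≤ b →
      (∫ y in (0:ℝ)..b, -(2 * I * μ * (ρ y : ℂ) * (f y : ℂ) ^ 2))
        = -(2 * I * μ) * ((∫ y in (0:ℝ)..b, f y ^ 2 * ρ y : ℝ) : ℂ) := by
    intro b hb
    rw [← intervalIntegral.integral_ofReal, ← intervalIntegral.integral_const_mul]
    apply intervalIntegral.integral_congr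
    intro x _
    push_cast
    ring
  -- limit as b → ∞
  have htendK : Filter.Tendsto (fun b => (∫ y in (0:ℝ)..b, f y ^ 2 * ρ y : ℝ))
      Filter.atTop (nhds K) := by
    have : K = ∫ x in Ioi (0:ℝ), f x ^ 2 * ρ x := by
      rw [hK, MeasureTheory.integral_Ici_eq_integral_Ioi]
    rw [this]
    exact MeasureTheory.intervalIntegral_tendsto_integral_Ioi 0
      (hint.mono_set Ioi_subset_Ici_self) Filter.tendsto_id
  have htendF : Filter.Tendsto F Filter.atTop (nhds (F 0 + -(2 * I * μ) * (K : ℂ))) := by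
    have heq : ∀ᶠ b in Filter.atTop,
        F 0 + -(2 * I * μ) * ((∫ y in (0:ℝ)..b, f y ^ 2 * ρ y : ℝ) : ℂ) = F b := by
      filter_upwards [Filter.eventually_ge_atTop a] with b hab
      rw [← hexpr b (ha.le.trans hab), hFTC b hab]; ring
    apply Filter.Tendsto.congr' heq
    exact Filter.Tendsto.const_add _
      ((Complex.continuous_ofReal.tendsto _).comp htendK |>.const_mul _)
  -- conclude F 0 = 2 I μ K
  have hW0 : (f 0 : ℂ) * g' 0 - (f' 0 : ℂ) * g 0 = 2 * I * μ * (K : ℂ) := by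
    have := tendsto_nhds_unique hlim htendF
    have hF0 : F 0 = (f 0 : ℂ) * g' 0 - (f' 0 : ℂ) * g 0 := rfl
    rw [hF0] at this
    linear_combination -this
  -- final algebra
  have hzeroC : ((β : ℝ) : ℂ) * (f' 0 : ℂ)
      + ((α₀ - α₁ * μ - α₂ * μ ^ 2 : ℝ) : ℂ) * (f 0 : ℂ) = 0 := by
    exact_mod_cast congrArg (Complex.ofReal) hzero
  have hβC : ((β : ℝ) : ℂ) ≠ 0 := Complex.ofReal_ne_zero.mpr hβμ
  rw [hEdot]
  push_cast
  field_simp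
  push_cast at hzeroC hW0 ⊢
  rw [show ((β : ℝ) : ℂ) = (β₀ : ℂ) - β₁ * μ - β₂ * μ ^ 2 by rw [hβ]; push_cast; ring]
    at hzeroC ⊢
  linear_combination (I * ((β₀:ℂ) - β₁*μ - β₂*μ^2)^2) * hW0
    + (I * (g 0) * ((β₀:ℂ) - β₁*μ - β₂*μ^2)
      - ((β₁:ℂ) + 2*(μ:ℂ)*β₂) * (f 0 : ℂ)) * hzeroC
    + (((β₁:ℂ) + 2*μ*β₂) * (f' 0 : ℂ) * (f 0 : ℂ) * ((β₀:ℂ) - β₁*μ - β₂*μ^2)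
      + ((α₁:ℂ) + 2*μ*α₂) * (f 0 : ℂ)^2 * ((β₀:ℂ) - β₁*μ - β₂*μ^2)
      + 2*(μ:ℂ)*(K:ℂ)*((β₀:ℂ) - β₁*μ - β₂*μ^2)^2) * Complex.I_sq
end

section
/- Under the hypotheses of the preceding identity (μ > 0; β_μ = β₀ − β₁μ − β₂μ² ≠ 0; f real-valued solving −f″ + qf = −μ²ρf; g solving −g″ + qg = −μ²ρg + 2iμρf for x ≠ a; f²ρ integrable; fg′ − f′g → 0 at ∞; β_μ f′(0) + α_μ f(0) = 0), assume additionally that δ₁ ≤ 0, δ₂ ≤ 0, δ₃ ≥ 0, that ∫₀^∞ f(x)²ρ(x) dx > 0, and that f(0) ≠ 0. Then Ė := i(β₁ + 2μβ₂)f′(0) + β_μ g′(0) + i(α₁ + 2μα₂)f(0) + α_μ g(0) is nonzero. That is, the zeros iμ (μ > 0) of the function E(λ) are simple. -/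
open Complex ComplexConjugate Set MeasureTheory

/-- The zeros `iμ` (μ > 0) of the function `E(λ)` are simple: `Ė(iμ) ≠ 0`. -/
theorem stmt8 (α₀ α₁ α₂ β₀ β₁ β₂ : ℝ)
    (hδ1 : α₀ * β₁ - α₁ * β₀ ≤ 0)
    (hδ2 : α₀ * β₂ - α₂ * β₀ ≤ 0)
    (hδ3 : 0 ≤ α₁ * β₂ - α₂ * β₁)
    (a α : ℝ) (ha : 0 < a) (hα : 0 < α) (hα1 : α ≠ 1)
    (ρ : ℝ → ℝ) (hρ : ∀ x, ρ x = if x < a then α ^ 2 else 1)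
    (μ : ℝ) (hμ : 0 < μ)
    (hβμ : β₀ - β₁ * μ - β₂ * μ ^ 2 ≠ 0)
    (q : ℝ → ℝ)
    (f f' f'' : ℝ → ℝ) (g g' g'' : ℝ → ℂ)
    (hf1 : ∀ x ∈ Ici (0:ℝ), HasDerivWithinAt f (f' x) (Ici 0) x)
    (hfc : ContinuousOn f' (Ici 0))
    (hf2 : ∀ x ∈ Ioo 0 a ∪ Ioi a, HasDerivAt f' (f'' x) x)
    (hfeq : ∀ x ∈ Ici (0:ℝ), x ≠ a →
      -f'' x + q x * f x = -(μ ^ 2) * ρ x * f x)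
    (hg1 : ∀ x ∈ Ici (0:ℝ), HasDerivWithinAt g (g' x) (Ici 0) x)
    (hgc : ContinuousOn g' (Ici 0))
    (hg2 : ∀ x ∈ Ioo 0 a ∪ Ioi a, HasDerivAt g' (g'' x) x)
    (hgeq : ∀ x ∈ Ici (0:ℝ), x ≠ a →
      -g'' x + (q x : ℂ) * g x = -((μ:ℂ) ^ 2) * (ρ x : ℂ) * g x
        + 2 * I * μ * (ρ x : ℂ) * f x)
    (hint : IntegrableOn (fun x => f x ^ 2 * ρ x) (Ici 0))
    (hpos : 0 < ∫ x in Ici (0:ℝ), f x ^ 2 * ρ x)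
    (hlim : Filter.Tendsto (fun x => (f x : ℂ) * g' x - (f' x : ℂ) * g x)
      Filter.atTop (nhds 0))
    (hzero : (β₀ - β₁ * μ - β₂ * μ ^ 2) * f' 0 + (α₀ - α₁ * μ - α₂ * μ ^ 2) * f 0 = 0)
    (hf0 : f 0 ≠ 0) :
    I * ((β₁ : ℂ) + 2 * μ * β₂) * f' 0
      + ((β₀ - β₁ * μ - β₂ * μ ^ 2 : ℝ) : ℂ) * g' 0
      + I * ((α₁ : ℂ) + 2 * μ * α₂) * f 0
      + ((α₀ - α₁ * μ - α₂ * μ ^ 2 : ℝ) : ℂ) * g 0 ≠ 0 := by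
  set B := β₀ - β₁ * μ - β₂ * μ ^ 2 with hB
  set A := α₀ - α₁ * μ - α₂ * μ ^ 2 with hA
  set J := ∫ x in Ici (0:ℝ), f x ^ 2 * ρ x with hJ
  set W : ℝ → ℂ := fun x => (f x : ℂ) * g' x - (f' x : ℂ) * g x with hWdef
  set h : ℝ → ℂ := fun x => (-(2 * I * μ)) * ((f x ^ 2 * ρ x : ℝ) : ℂ) with hhdef
  -- integrability of h
  have hintC : IntegrableOn h (Ici 0) := hint.ofReal.const_mul _
  have hii : ∀ c d : ℝ, 0 ≤ c → 0 ≤ d → IntervalIntegrable h volume c d := by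
    intro c d hc hd
    exact (hintC.mono_set (fun x hx => le_trans (le_min hc hd) hx.1)).intervalIntegrable
  -- continuity of W on Ici 0
  have hfC : ContinuousOn f (Ici 0) := fun x hx => (hf1 x hx).continuousWithinAt
  have hgC : ContinuousOn g (Ici 0) := fun x hx => (hg1 x hx).continuousWithinAt
  have hWc : ContinuousOn W (Ici 0) :=
    ((continuous_ofReal.comp_continuousOn hfC).mul hgc).sub
      ((continuous_ofReal.comp_continuousOn hfc).mul hgC)
  -- derivative of W
  have hWd : ∀ x ∈ Ioo 0 a ∪ Ioi a, HasDerivAt W (h x) x := by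
    intro x hx
    have hx0 : 0 < x := by
      rcases hx with h | h
      · exact h.1
      · exact ha.trans h
    have hxa : x ≠ a := by
      rcases hx with h | h
      · exact ne_of_lt h.2
      · exact ne_of_gt h
    have hmem : Ici (0:ℝ) ∈ nhds x := Ici_mem_nhds hx0
    have hfd : HasDerivAt f (f' x) x := (hf1 x hx0.le).hasDerivAt hmem
    have hgd : HasDerivAt g (g' x) x := (hg1 x hx0.le).hasDerivAt hmem
    have hd : HasDerivAt W
        (((f' x : ℂ) * g' x + (f x : ℂ) * g'' x)
          - ((f'' x : ℂ) * g x + (f' x : ℂ) * g' x)) x :=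
      (hfd.ofReal_comp.mul (hg2 x hx)).sub ((hf2 x hx).ofReal_comp.mul hgd)
    convert hd using 1
    have h1 := hgeq x hx0.le hxa
    have h2 : -(f'' x : ℂ) + (q x : ℂ) * f x = -((μ:ℂ) ^ 2) * ρ x * f x := by
      exact_mod_cast hfeq x hx0.le hxa
    simp only [hhdef]
    push_cast
    linear_combination (f x : ℂ) * h1 + (-(g x : ℂ)) * h2
  -- FTC on [0, b] for b ≥ a
  have hFTC : ∀ b, a ≤ b → ∫ x in (0:ℝ)..b, h x = W b - W 0 := by
    intro b hb
    have hb0 : (0:ℝ) ≤ b := le_trans ha.le hb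
    have h0a : ∫ x in (0:ℝ)..a, h x = W a - W 0 :=
      intervalIntegral.integral_eq_sub_of_hasDeriv_right_of_le ha.le
        (hWc.mono (fun x hx => hx.1))
        (fun x hx => (hWd x (Or.inl hx)).hasDerivWithinAt)
        (hii 0 a le_rfl ha.le)
    have hab : ∫ x in a..b, h x = W b - W a :=
      intervalIntegral.integral_eq_sub_of_hasDeriv_right_of_le hb
        (hWc.mono (fun x hx => le_trans ha.le hx.1))
        (fun x hx => (hWd x (Or.inr hx.1)).hasDerivWithinAt)
        (hii a b ha.le hb0)
    rw [← intervalIntegral.integral_add_adjacent_intervals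
      (hii 0 a le_rfl ha.le) (hii a b ha.le hb0), h0a, hab]
    ring
  -- take the limit b → ∞
  have hT1 : Filter.Tendsto (fun b => ∫ x in (0:ℝ)..b, h x) Filter.atTop
      (nhds (∫ x in Ioi (0:ℝ), h x)) :=
    intervalIntegral_tendsto_integral_Ioi 0 (hintC.mono_set Ioi_subset_Ici_self)
      Filter.tendsto_id
  have hT2 : Filter.Tendsto (fun b => ∫ x in (0:ℝ)..b, h x) Filter.atTop
      (nhds (0 - W 0)) := by
    refine (hlim.sub_const (W 0)).congr' ?_
    filter_upwards [Filter.eventually_ge_atTop a] with b hb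
    exact (hFTC b hb).symm
  have hIeq : ∫ x in Ioi (0:ℝ), h x = -W 0 := by
    have := tendsto_nhds_unique hT1 hT2
    rw [this]; ring
  -- compute the integral of h
  have hIval : ∫ x in Ioi (0:ℝ), h x = (-(2 * I * μ)) * (J : ℂ) := by
    have h1 : ∫ x in Ioi (0:ℝ), ((f x ^ 2 * ρ x : ℝ) : ℂ)
        = ((∫ x in Ioi (0:ℝ), f x ^ 2 * ρ x : ℝ) : ℂ) := integral_ofReal
    simp only [hhdef]
    rw [MeasureTheory.integral_const_mul, h1, hJ, integral_Ici_eq_integral_Ioi]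
  have hW0 : (f 0 : ℂ) * g' 0 - (f' 0 : ℂ) * g 0 = 2 * I * μ * (J : ℂ) := by
    have : W 0 = 2 * I * μ * (J : ℂ) := by
      have := hIeq
      rw [hIval] at this
      linear_combination this
    simpa [hWdef] using this
  -- final algebra
  intro hE
  have hzC : (B : ℂ) * f' 0 + (A : ℂ) * f 0 = 0 := by exact_mod_cast hzero
  have key : (B : ℂ) * (f 0 : ℂ) *
      (I * ((β₁ : ℂ) + 2 * μ * β₂) * f' 0 + ((B : ℝ) : ℂ) * g' 0
        + I * ((α₁ : ℂ) + 2 * μ * α₂) * f 0 + ((A : ℝ) : ℂ) * g 0)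
      = I * ((2 * μ * B ^ 2 * J
          + f 0 ^ 2 * ((α₁ + 2 * μ * α₂) * B - (β₁ + 2 * μ * β₂) * A) : ℝ) : ℂ) := by
    push_cast
    linear_combination ((B : ℂ))^2 * hW0
      + ((B : ℂ) * g 0 + I * (f 0 : ℂ) * ((β₁ : ℂ) + 2 * μ * β₂)) * hzC
  rw [hE, mul_zero] at key
  have hKz : (2 * μ * B ^ 2 * J
      + f 0 ^ 2 * ((α₁ + 2 * μ * α₂) * B - (β₁ + 2 * μ * β₂) * A) : ℝ) = 0 := by
    have := key.symm
    rw [mul_eq_zero] at this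
    rcases this with h | h
    · exact absurd h I_ne_zero
    · exact_mod_cast h
  have hD : 0 ≤ (α₁ + 2 * μ * α₂) * B - (β₁ + 2 * μ * β₂) * A := by
    have hexp : (α₁ + 2 * μ * α₂) * B - (β₁ + 2 * μ * β₂) * A
        = -(α₀ * β₁ - α₁ * β₀) - 2 * μ * (α₀ * β₂ - α₂ * β₀)
          + μ ^ 2 * (α₁ * β₂ - α₂ * β₁) := by
      rw [hB, hA]; ring
    rw [hexp]
    have h1 : 0 ≤ -(α₀ * β₁ - α₁ * β₀) := by linarith
    have h2 : 0 ≤ 2 * μ * (-(α₀ * β₂ - α₂ * β₀)) := by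
      have := mul_nonneg (by linarith : (0:ℝ) ≤ 2 * μ) (by linarith : (0:ℝ) ≤ -(α₀ * β₂ - α₂ * β₀))
      linarith
    have h3 : 0 ≤ μ ^ 2 * (α₁ * β₂ - α₂ * β₁) := mul_nonneg (sq_nonneg μ) hδ3
    linarith
  have hB2 : 0 < B ^ 2 := sq_pos_of_ne_zero hβμ
  have hK : 0 < 2 * μ * B ^ 2 * J
      + f 0 ^ 2 * ((α₁ + 2 * μ * α₂) * B - (β₁ + 2 * μ * β₂) * A) := by
    have h1 : 0 < 2 * μ * B ^ 2 * J :=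
      mul_pos (mul_pos (by linarith) hB2) hpos
    have h2 : 0 ≤ f 0 ^ 2 * ((α₁ + 2 * μ * α₂) * B - (β₁ + 2 * μ * β₂) * A) :=
      mul_nonneg (sq_nonneg _) hD
    linarith
  linarith [hKz, hK]
end

section
/- For every real λ, e₀(0,λ) ≠ 0 and conj(e₀(0,λ))/e₀(0,λ) = e^{−2iλa}·(1 + τe^{−2iλαa})/(e^{−2iλαa} + τ). (This is the unperturbed scattering function S₀(λ) in the case β₂ = 0.) -/
open Complex ComplexConjugate

private lemma stmt12_aux (c t x y : ℂ) (hc : c ≠ 0) (hx : x ≠ 0) (hy : y ≠ 0)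
    (h1 : (1:ℂ) + t*(y*y) ≠ 0) (h2 : ((y*y)⁻¹ + t) ≠ 0) :
    (c*(y/x) + c*t*(x*y)⁻¹) / (c*(x/y)*(1+t*(y*y))) = (x*x)⁻¹*(1+t*(y*y)⁻¹)/((y*y)⁻¹+t) := by
  rw [div_eq_div_iff (by exact mul_ne_zero (mul_ne_zero hc (div_ne_zero hx hy)) h1) h2]
  field_simp

/-- The unperturbed scattering function in the case `β₂ = 0`:
`e₀(0,λ) ≠ 0` and `conj(e₀(0,λ))/e₀(0,λ) = e^{−2iλa}(1 + τe^{−2iλαa})/(e^{−2iλαa} + τ)`. -/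
theorem stmt12 (a α : ℝ) (ha : 0 < a) (hα : 0 < α) (hα1 : α ≠ 1)
    (τ : ℝ) (hτ : τ = (α - 1) / (α + 1)) :
    ∀ l : ℝ,
      (1/2 : ℂ) * (1 + 1 / (α : ℂ)) * exp (I * l * (a * (1 - α)))
        + (1/2 : ℂ) * (1 - 1 / (α : ℂ)) * exp (I * l * (a * (1 + α))) ≠ 0 ∧
      conj ((1/2 : ℂ) * (1 + 1 / (α : ℂ)) * exp (I * l * (a * (1 - α)))
          + (1/2 : ℂ) * (1 - 1 / (α : ℂ)) * exp (I * l * (a * (1 + α)))) /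
        ((1/2 : ℂ) * (1 + 1 / (α : ℂ)) * exp (I * l * (a * (1 - α)))
          + (1/2 : ℂ) * (1 - 1 / (α : ℂ)) * exp (I * l * (a * (1 + α)))) =
      exp (-2 * I * l * a) * (1 + (τ : ℂ) * exp (-2 * I * l * α * a)) /
        (exp (-2 * I * l * α * a) + (τ : ℂ)) := by
  intro l
  have hαc : (α : ℂ) ≠ 0 := by exact_mod_cast hα.ne'
  have hα1c : (α : ℂ) + 1 ≠ 0 := by
    have : (0:ℝ) < α + 1 := by linarith
    exact_mod_cast (by exact_mod_cast this.ne' : ((α + 1 : ℝ):ℂ) ≠ 0)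
  set u : ℂ := exp (I * l * (a * α)) with hu
  set w : ℂ := exp (I * l * a) with hw
  have hune : u ≠ 0 := exp_ne_zero _
  have hwne : w ≠ 0 := exp_ne_zero _
  have habsu : ‖u‖ = 1 := by
    rw [hu, Complex.norm_exp]
    norm_num
  have hτlt : |τ| < 1 := by
    rw [hτ, abs_div, abs_of_pos (by linarith : (0:ℝ) < α + 1), div_lt_one (by linarith)]
    rw [abs_lt]; constructor <;> linarith
  have key : (1 : ℂ) + (τ:ℂ) * (u * u) ≠ 0 := by
    intro h
    have h2 : (τ:ℂ) * (u * u) = -1 := by linear_combination h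
    have h3 : ‖(τ:ℂ) * (u * u)‖ = 1 := by rw [h2]; simp
    rw [norm_mul, norm_mul, habsu, Complex.norm_real] at h3
    simp at h3
    linarith [hτlt, h3.le]
  have hc1ne : (1/2 : ℂ) * (1 + 1 / (α : ℂ)) ≠ 0 := by
    have : (0:ℝ) < 1 + 1/α := by positivity
    have h' : ((1 + 1/α : ℝ):ℂ) ≠ 0 := by exact_mod_cast this.ne'
    push_cast at h'
    simp only [ne_eq, mul_eq_zero, not_or]
    exact ⟨by norm_num, h'⟩
  have hA : exp (I * l * (a * (1 - α))) = w / u := by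
    rw [hu, hw, ← Complex.exp_sub]; congr 1; ring
  have hB : exp (I * l * (a * (1 + α))) = w * u := by
    rw [hu, hw, ← Complex.exp_add]; congr 1; ring
  have hE2 : exp (-2 * I * l * a) = (w * w)⁻¹ := by
    rw [hw, ← Complex.exp_add, ← Complex.exp_neg]; congr 1; ring
  have hE3 : exp (-2 * I * l * α * a) = (u * u)⁻¹ := by
    rw [hu, ← Complex.exp_add, ← Complex.exp_neg]; congr 1; ring
  have hcτ : (1/2 : ℂ) * (1 - 1 / (α : ℂ)) = (1/2 : ℂ) * (1 + 1 / (α : ℂ)) * (τ:ℂ) := by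
    rw [hτ]; push_cast; field_simp
  have hfac : (1/2 : ℂ) * (1 + 1 / (α : ℂ)) * exp (I * l * (a * (1 - α)))
        + (1/2 : ℂ) * (1 - 1 / (α : ℂ)) * exp (I * l * (a * (1 + α)))
      = (1/2 : ℂ) * (1 + 1 / (α : ℂ)) * (w / u) * (1 + (τ:ℂ) * (u * u)) := by
    rw [hA, hB, hcτ]; field_simp
  have hne : (1/2 : ℂ) * (1 + 1 / (α : ℂ)) * exp (I * l * (a * (1 - α)))
        + (1/2 : ℂ) * (1 - 1 / (α : ℂ)) * exp (I * l * (a * (1 + α))) ≠ 0 := by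
    rw [hfac]
    exact mul_ne_zero (mul_ne_zero hc1ne (div_ne_zero hwne hune)) key
  refine ⟨hne, ?_⟩
  have hconjA : conj (exp (I * l * (a * (1 - α)))) = u / w := by
    rw [← Complex.exp_conj]
    simp only [map_mul, map_sub, map_one, Complex.conj_I, Complex.conj_ofReal]
    rw [hu, hw, ← Complex.exp_sub]; congr 1; ring
  have hconjB : conj (exp (I * l * (a * (1 + α)))) = (w * u)⁻¹ := by
    rw [← Complex.exp_conj]
    simp only [map_mul, map_add, map_one, Complex.conj_I, Complex.conj_ofReal]
    rw [hu, hw, ← Complex.exp_add, ← Complex.exp_neg]; congr 1; ring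
  have hden2 : exp (-2 * I * l * α * a) + (τ:ℂ) ≠ 0 := by
    rw [hE3]
    intro h
    apply key
    have : (u*u) * ((u*u)⁻¹ + (τ:ℂ)) = 0 := by rw [h, mul_zero]
    rw [mul_add, mul_inv_cancel₀ (mul_ne_zero hune hune)] at this
    linear_combination this
  rw [map_add, map_mul, map_mul, map_mul, map_mul, hconjA, hconjB, hE2, hE3, hfac]
  simp only [map_one, map_sub, map_add, map_div₀, map_ofNat, Complex.conj_ofReal]
  rw [hcτ]
  exact stmt12_aux _ _ _ _ hc1ne hwne hune key (by rw [← hE3]; exact hden2)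
end

section
/- For every nonzero real λ, the x-derivative e₀′(0,λ) := ∂e₀/∂x(0,λ) = iλα[½(1 + 1/α)e^{iλa(1−α)} − ½(1 − 1/α)e^{iλa(1+α)}] is nonzero, and conj(e₀′(0,λ))/e₀′(0,λ) = −e^{−2iλa}·(1 − τe^{−2iλαa})/(e^{−2iλαa} − τ). (This is the unperturbed scattering function S₀(λ) in the case β₂ ≠ 0.) -/
open Complex ComplexConjugate

set_option maxHeartbeats 1000000

/-- The unperturbed scattering function in the case `β₂ ≠ 0`: for nonzero real `λ`,
`e₀′(0,λ) ≠ 0` and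
`conj(e₀′(0,λ))/e₀′(0,λ) = −e^{−2iλa}(1 − τe^{−2iλαa})/(e^{−2iλαa} − τ)`. -/
theorem stmt13 (a α : ℝ) (ha : 0 < a) (hα : 0 < α) (hα1 : α ≠ 1)
    (τ : ℝ) (hτ : τ = (α - 1) / (α + 1)) :
    ∀ l : ℝ, l ≠ 0 →
      I * l * α * ((1/2 : ℂ) * (1 + 1 / (α : ℂ)) * exp (I * l * (a * (1 - α)))
        - (1/2 : ℂ) * (1 - 1 / (α : ℂ)) * exp (I * l * (a * (1 + α)))) ≠ 0 ∧
      conj (I * l * α * ((1/2 : ℂ) * (1 + 1 / (α : ℂ)) * exp (I * l * (a * (1 - α)))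
          - (1/2 : ℂ) * (1 - 1 / (α : ℂ)) * exp (I * l * (a * (1 + α))))) /
        (I * l * α * ((1/2 : ℂ) * (1 + 1 / (α : ℂ)) * exp (I * l * (a * (1 - α)))
          - (1/2 : ℂ) * (1 - 1 / (α : ℂ)) * exp (I * l * (a * (1 + α))))) =
      -(exp (-2 * I * l * a) * (1 - (τ : ℂ) * exp (-2 * I * l * α * a)) /
        (exp (-2 * I * l * α * a) - (τ : ℂ))) := by

  intro l hl
  have hαc : (α : ℂ) ≠ 0 := by exact_mod_cast hα.ne'
  have hα1c : (α : ℂ) + 1 ≠ 0 := by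
    intro h
    have h' : α + 1 = 0 := by exact_mod_cast h
    linarith
  have hlc : (l : ℂ) ≠ 0 := by exact_mod_cast hl
  have hτlt : |τ| < 1 := by
    rw [hτ, abs_div, abs_of_pos (by linarith : (0:ℝ) < α + 1), div_lt_one (by linarith),
      abs_lt]
    constructor <;> linarith
  set s : ℂ := exp (I * l * (a * α)) with hs
  set t : ℂ := exp (I * l * a) with ht
  have hsne : s ≠ 0 := Complex.exp_ne_zero _
  have htne : t ≠ 0 := Complex.exp_ne_zero _
  have habs_s : ‖s‖ = 1 := by
    rw [hs, show I * (l:ℂ) * (a * α) = ((l * (a * α) : ℝ) : ℂ) * I by push_cast; ring,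
      Complex.norm_exp_ofReal_mul_I]
  have hkey : ∀ z : ℂ, ‖z‖ = 1 → 1 - (τ : ℂ) * z ≠ 0 := by
    intro z hz h
    have h1 : (τ : ℂ) * z = 1 := by linear_combination -h
    have h2 := congrArg (‖·‖) h1
    simp [norm_mul, hz, Complex.norm_real] at h2
    exact absurd h2 (ne_of_lt hτlt)
  have hτc : (1 : ℂ) - 1 / (α : ℂ) = (τ : ℂ) * (1 + 1 / (α : ℂ)) := by
    rw [hτ]; push_cast; field_simp
  have h1 : exp (I * (l:ℂ) * ((a:ℂ) * (1 - α))) = t / s := by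
    rw [ht, hs, ← Complex.exp_sub]; congr 1; ring
  have h2 : exp (I * (l:ℂ) * ((a:ℂ) * (1 + α))) = t * s := by
    rw [ht, hs, ← Complex.exp_add]; congr 1; ring
  have h3 : exp (-2 * I * (l:ℂ) * a) = (t * t)⁻¹ := by
    rw [ht, ← Complex.exp_add, ← Complex.exp_neg]; congr 1; ring
  have h4 : exp (-2 * I * (l:ℂ) * α * a) = (s * s)⁻¹ := by
    rw [hs, ← Complex.exp_add, ← Complex.exp_neg]; congr 1; ring
  have hct : conj t = t⁻¹ := by
    rw [ht, ← Complex.exp_conj, ← Complex.exp_neg]; congr 1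
    simp [map_mul, Complex.conj_I, Complex.conj_ofReal]
  have hcs : conj s = s⁻¹ := by
    rw [hs, ← Complex.exp_conj, ← Complex.exp_neg]; congr 1
    simp [map_mul, Complex.conj_I, Complex.conj_ofReal]
  have h1α : (1 : ℂ) + 1 / (α : ℂ) ≠ 0 := by
    intro h
    apply hα1c
    field_simp at h
    linear_combination h
  have hfac : (1/2 : ℂ) * (1 + 1 / (α : ℂ)) * (t / s)
      - (1/2 : ℂ) * (1 - 1 / (α : ℂ)) * (t * s)
      = (1/2 : ℂ) * (1 + 1 / (α : ℂ)) * (t / s) * (1 - (τ : ℂ) * (s * s)) := by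
    rw [hτc]; field_simp
  have habs_ss : ‖s * s‖ = 1 := by rw [norm_mul, habs_s]; norm_num
  have hBne : (1/2 : ℂ) * (1 + 1 / (α : ℂ)) * (t / s)
      - (1/2 : ℂ) * (1 - 1 / (α : ℂ)) * (t * s) ≠ 0 := by
    rw [hfac]
    exact mul_ne_zero (mul_ne_zero (mul_ne_zero (by norm_num) h1α)
      (div_ne_zero htne hsne)) (hkey _ habs_ss)
  have hEne : I * (l:ℂ) * α * ((1/2 : ℂ) * (1 + 1 / (α : ℂ)) * exp (I * l * (a * (1 - α)))
      - (1/2 : ℂ) * (1 - 1 / (α : ℂ)) * exp (I * l * (a * (1 + α)))) ≠ 0 := by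
    rw [h1, h2]
    exact mul_ne_zero (mul_ne_zero (mul_ne_zero I_ne_zero hlc) hαc) hBne
  refine ⟨hEne, ?_⟩
  have hden : (s * s)⁻¹ - (τ : ℂ) ≠ 0 := by
    intro h
    apply hkey _ habs_ss
    have h5 := congrArg (· * (s * s)) h
    simp only [sub_mul, inv_mul_cancel₀ (mul_ne_zero hsne hsne), zero_mul] at h5
    linear_combination h5
  rw [h1, h2, h3, h4, hτc]
  simp only [map_mul, map_sub, map_add, map_div₀, map_one, Complex.conj_I,
    Complex.conj_ofReal, hct, hcs, map_ofNat]
  rw [h1, h2, hτc] at hEne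
  rw [← neg_div, div_eq_div_iff hEne hden]
  field_simp
end
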